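/- arXiv:1010.1101 — 7 statements merged into one kernel-verified Lean document; each statement's English description precedes it below -/
import Mathlib

section
/- Let A be a commutative ring, n ≥ 1 with n·1_A invertible in A, and let ω ∈ A be a principal n-th root of unity. Then the A-algebra homomorphism from A[X]/(X^n − 1) to the product algebra A^n that sends the class of a polynomial f to the evaluation vector (f(ω^0), f(ω^1), …, f(ω^{n−1})) is bijective, i.e., A[X]/(X^n − 1) is isomorphic to A^n as an A-algebra. -/
/-!
Evaluation at `1, ω, …, ω ^ (n - 1)` kills `X ^ n - 1`, so it factors through the quotient.
Summing the geometric series and using that `1 - ω ^ ν` is a non-zero-divisor gives the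
orthogonality relations `∑ j < n, ω ^ ((i - k) j) = n δᵢₖ`; since `n` is invertible they make the
inverse discrete Fourier transform a right inverse, so the map is surjective. The quotient is free
of rank `n` with basis `1, X, …, X ^ (n - 1)`, and a surjective linear map between finite free
modules of the same rank over a commutative ring is injective (Vasconcelos), so it is bijective.
-/

open Polynomial Finset

theorem geom_sum_eq_zero_of_pow_eq_one {A : Type*} [CommRing A] {x : A} {n : ℕ}
    (hx : x ^ n = 1) (h : 1 - x ∈ nonZeroDivisors A) : ∑ i ∈ range n, x ^ i = 0 :=
  (mul_right_mem_nonZeroDivisors_eq_zero_iff h).mp <| by rw [geom_sum_mul_neg, hx, sub_self]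

theorem Polynomial.Monic.injective_of_surjective_quotient {A : Type*} [CommRing A] {g : A[X]}
    (hg : g.Monic) {n : ℕ} (hdeg : g.natDegree = n)
    (f : (A[X] ⧸ Ideal.span {g}) →ₗ[A] (Fin n → A)) (hf : Function.Surjective f) :
    Function.Injective f := by
  subst hdeg
  exact OrzechProperty.injective_of_surjective_of_injective
    (AdjoinRoot.powerBasis' hg).basis.equivFun.toLinearMap f (LinearEquiv.injective _) hf

section PrincipalRoot

variable {A : Type*} [CommRing A] {n : ℕ} {ω : A}

-- `ω ^ (n - k)` is `ω⁻ᵏ`, written without inverses.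
theorem geom_sum_pow_mul_pow_sub_eq_ite (hω : ω ^ n = 1)
    (hprin : ∀ ν : ℕ, 1 ≤ ν → ν < n → 1 - ω ^ ν ∈ nonZeroDivisors A)
    {i k : ℕ} (hi : i < n) (hk : k < n) :
    ∑ j ∈ range n, (ω ^ i * ω ^ (n - k)) ^ j = if i = k then (n : A) else 0 := by
  rw [← pow_add]
  split_ifs with hik
  · subst hik
    simp [Nat.add_sub_cancel' hi.le, hω]
  · obtain ⟨ν, hν, hνn, hων⟩ : ∃ ν, 1 ≤ ν ∧ ν < n ∧ ω ^ (i + (n - k)) = ω ^ ν := by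
      rcases lt_or_gt_of_ne hik with hlt | hgt
      · exact ⟨i + (n - k), by omega, by omega, rfl⟩
      · refine ⟨i - k, by omega, by omega, ?_⟩
        rw [show i + (n - k) = n + (i - k) by omega, pow_add, hω, one_mul]
    rw [hων]
    exact geom_sum_eq_zero_of_pow_eq_one (by rw [← pow_mul, mul_comm, pow_mul, hω, one_pow])
      (hprin ν hν hνn)

variable (n) in
noncomputable def evalPowers (ω : A) : A[X] →ₐ[A] (Fin n → A) :=
  AlgHom.pi fun i => aeval (ω ^ (i : ℕ))

theorem evalPowers_apply (f : A[X]) (i : Fin n) : evalPowers n ω f i = f.eval (ω ^ (i : ℕ)) := by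
  simp [evalPowers, coe_aeval_eq_eval]

theorem evalPowers_X_pow_sub_one (hω : ω ^ n = 1) : evalPowers n ω (X ^ n - 1) = 0 := by
  funext i
  rw [evalPowers_apply, eval_sub, eval_pow, eval_X, eval_one, pow_right_comm, hω, one_pow, sub_self,
    Pi.zero_apply]

variable (n) in
noncomputable def quotientEvalPowers (hω : ω ^ n = 1) :
    (A[X] ⧸ Ideal.span {(X : A[X]) ^ n - 1}) →ₐ[A] (Fin n → A) :=
  Ideal.Quotient.liftₐ _ (evalPowers n ω) fun f hf => by
    obtain ⟨q, rfl⟩ := Ideal.mem_span_singleton'.mp hf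
    rw [map_mul, evalPowers_X_pow_sub_one hω, mul_zero]

theorem evalPowers_surjective (hnunit : IsUnit (n : A)) (hω : ω ^ n = 1)
    (hprin : ∀ ν : ℕ, 1 ≤ ν → ν < n → 1 - ω ^ ν ∈ nonZeroDivisors A) :
    Function.Surjective (evalPowers n ω) := by
  intro a
  -- the inverse discrete Fourier transform of `a`
  refine ⟨C (↑hnunit.unit⁻¹ : A) *
    ∑ k : Fin n, C (a k) * ∑ j ∈ range n, (X * C (ω ^ (n - k))) ^ j, ?_⟩
  funext i
  simp only [evalPowers_apply, eval_mul, eval_C, eval_finsetSum, eval_pow, eval_X,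
    geom_sum_pow_mul_pow_sub_eq_ite hω hprin i.isLt (Fin.isLt _), Fin.val_inj, mul_ite, mul_zero,
    sum_ite_eq, mem_univ, if_true]
  rw [mul_left_comm, hnunit.val_inv_mul, mul_one]

end PrincipalRoot

/-- Let `A` be a commutative ring, `n ≥ 1` with `n · 1_A` invertible,
and let `ω ∈ A` be a principal `n`-th root of unity. Then the `A`-algebra homomorphism
`A[X]/(X^n − 1) → A^n` sending the class of a polynomial `f` to its evaluation vector
`(f(ω^0), …, f(ω^{n−1}))` is bijective; i.e. there is an `A`-algebra isomorphism
`A[X]/(X^n − 1) ≃ A^n` given by evaluation at the powers of `ω`. -/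
theorem quotient_iso_pi (A : Type*) [CommRing A] (n : ℕ) (hn : 1 ≤ n)
    (hnunit : IsUnit (n : A)) (ω : A) (hω : ω ^ n = 1)
    (hprin : ∀ ν : ℕ, 1 ≤ ν → ν < n → 1 - ω ^ ν ∈ nonZeroDivisors A) :
    ∃ e : (Polynomial A ⧸ Ideal.span {(Polynomial.X : Polynomial A) ^ n - 1}) ≃ₐ[A]
        (Fin n → A),
      ∀ f : Polynomial A,
        e (Ideal.Quotient.mk (Ideal.span {(Polynomial.X : Polynomial A) ^ n - 1}) f) =
          fun i : Fin n => f.eval (ω ^ (i : ℕ)) := by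
  have hsurj : Function.Surjective (quotientEvalPowers n hω) := fun a =>
    let ⟨f, hf⟩ := evalPowers_surjective hnunit hω hprin a
    ⟨Ideal.Quotient.mk _ f, hf⟩
  have hinj : Function.Injective (quotientEvalPowers n hω) := by
    nontriviality A
    exact (monic_X_pow_sub_C (1 : A) (by omega)).injective_of_surjective_quotient
      natDegree_X_pow_sub_C (quotientEvalPowers n hω).toLinearMap hsurj
  exact ⟨.ofBijective _ ⟨hinj, hsurj⟩, fun f => funext (evalPowers_apply f)⟩
end

section
/- Let k be a field of characteristic different from 2 and let n = 2^m for some m ≥ 0. In the quotient ring A_n = k[X]/(X^n + 1), the residue class x of X is a principal 2n-th root of unity; that is, x^{2n} = 1 and for every ν with 1 ≤ ν < 2n, the element 1 − x^ν is not a zero divisor in A_n. -/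
/-!
Since `x ^ n = -1`, the element `x` has order dividing `2n`, and `1 - x ^ ν` divides
`1 - x ^ d` for `d = gcd ν (2n)`. As `n` is a power of two and `ν < 2n`, `d` divides `n`,
so `1 - x ^ d` divides `1 - x ^ n = 2`, a unit because the characteristic is not `2`.
Hence every `1 - x ^ ν` is even a unit.
-/

theorem Nat.dvd_prime_pow_of_dvd_pow_succ_of_ne {p d m : ℕ} (hp : p.Prime)
    (hd : d ∣ p ^ (m + 1)) (hne : d ≠ p ^ (m + 1)) : d ∣ p ^ m := by
  obtain ⟨i, hi, rfl⟩ := (Nat.dvd_prime_pow hp).mp hd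
  have him : i ≤ m := by
    rcases hi.lt_or_eq with hlt | rfl
    · omega
    · exact absurd rfl hne
  exact pow_dvd_pow p him

section CommRing

variable {R : Type*} [CommRing R]

theorem exists_pow_pow_eq_pow_gcd {x : R} {N : ℕ} (hx : x ^ N = 1) (ν : ℕ) :
    ∃ u : ℕ, (x ^ ν) ^ u = x ^ Nat.gcd ν N := by
  rcases lt_or_ge (Nat.gcd ν N) N with hlt | hge
  · obtain ⟨u, -, hu⟩ := Nat.exists_mul_mod_eq_gcd hlt
    exact ⟨u, by rw [← pow_mul, pow_eq_pow_mod _ hx, hu]⟩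
  · rcases N.eq_zero_or_pos with rfl | hN
    · exact ⟨1, by simp⟩
    · have hgcd : Nat.gcd ν N = N := le_antisymm (Nat.gcd_le_right ν hN) hge
      exact ⟨0, by rw [hgcd, hx, pow_zero]⟩

theorem one_sub_pow_dvd_one_sub_pow_gcd {x : R} {N : ℕ} (hx : x ^ N = 1) (ν : ℕ) :
    1 - x ^ ν ∣ 1 - x ^ Nat.gcd ν N := by
  obtain ⟨u, hu⟩ := exists_pow_pow_eq_pow_gcd hx ν
  exact hu ▸ one_sub_dvd_one_sub_pow (x ^ ν) u

theorem isUnit_one_sub_pow_of_dvd {x : R} {n d : ℕ} (hx : x ^ n = -1) (h2 : IsUnit (2 : R))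
    (hd : d ∣ n) : IsUnit (1 - x ^ d) := by
  have hdvd : 1 - x ^ d ∣ 1 - (x ^ d) ^ (n / d) := one_sub_dvd_one_sub_pow _ _
  rw [← pow_mul, Nat.mul_div_cancel' hd, hx, sub_neg_eq_add, one_add_one_eq_two] at hdvd
  exact isUnit_of_dvd_unit hdvd h2

theorem isUnit_one_sub_pow_of_pow_two_pow_eq_neg_one {x : R} {m ν : ℕ}
    (hx : x ^ 2 ^ m = -1) (h2 : IsUnit (2 : R)) (hν₀ : 0 < ν) (hν : ν < 2 ^ (m + 1)) :
    IsUnit (1 - x ^ ν) := by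
  have hx_order : x ^ 2 ^ (m + 1) = 1 := by rw [pow_succ, pow_mul, hx, neg_one_sq]
  have hgcd_lt : Nat.gcd ν (2 ^ (m + 1)) < 2 ^ (m + 1) :=
    (Nat.gcd_le_left _ hν₀).trans_lt hν
  have hgcd_dvd : Nat.gcd ν (2 ^ (m + 1)) ∣ 2 ^ m :=
    Nat.dvd_prime_pow_of_dvd_pow_succ_of_ne Nat.prime_two (Nat.gcd_dvd_right _ _) hgcd_lt.ne
  exact isUnit_of_dvd_unit (one_sub_pow_dvd_one_sub_pow_gcd hx_order ν)
    (isUnit_one_sub_pow_of_dvd hx h2 hgcd_dvd)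

end CommRing

theorem Ideal.Quotient.mk_X_pow_eq_neg_one (k : Type*) [CommRing k] (n : ℕ) :
    Ideal.Quotient.mk (Ideal.span {(Polynomial.X : Polynomial k) ^ n + 1}) Polynomial.X ^ n
      = -1 := by
  rw [← map_pow, eq_neg_iff_add_eq_zero, ← map_one (Ideal.Quotient.mk _), ← map_add,
    Ideal.Quotient.eq_zero_iff_mem]
  exact Ideal.mem_span_singleton_self _

/-- Let `k` be a field of characteristic different from 2 and
`n = 2 ^ m`. In `A_n = k[X]/(X^n + 1)` the residue class `x` of `X` is a principal
`2n`-th root of unity: `x ^ (2n) = 1` and `1 - x ^ ν` is not a zero divisor for all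
`1 ≤ ν < 2n`. -/
theorem schoenhage_strassen_root (k : Type*) [Field k] (hchar : ringChar k ≠ 2)
    (m n : ℕ) (hn : n = 2 ^ m) :
    (Ideal.Quotient.mk (Ideal.span {(Polynomial.X : Polynomial k) ^ n + 1})
        Polynomial.X) ^ (2 * n) = 1 ∧
      ∀ ν : ℕ, 1 ≤ ν → ν < 2 * n →
        1 - (Ideal.Quotient.mk (Ideal.span {(Polynomial.X : Polynomial k) ^ n + 1})
              Polynomial.X) ^ ν ∈
          nonZeroDivisors
            (Polynomial k ⧸ Ideal.span {(Polynomial.X : Polynomial k) ^ n + 1}) := by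
  have hx := Ideal.Quotient.mk_X_pow_eq_neg_one k n
  have h2 : IsUnit (2 : Polynomial k ⧸ Ideal.span {(Polynomial.X : Polynomial k) ^ n + 1}) := by
    simpa only [map_ofNat] using (Ring.two_ne_zero hchar).isUnit.map
      (algebraMap k (Polynomial k ⧸ Ideal.span {(Polynomial.X : Polynomial k) ^ n + 1}))
  refine ⟨by rw [mul_comm, pow_mul, hx]; norm_num, fun ν hν₀ hν => ?_⟩
  subst hn
  rw [← pow_succ'] at hν
  exact (isUnit_one_sub_pow_of_pow_two_pow_eq_neg_one hx h2 hν₀ hν).mem_nonZeroDivisors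
end

section
/- Let k be a field of characteristic 2 and let N = 3^ν for some ν ≥ 0. In the quotient ring B_N = k[X]/(X^{2N} + X^N + 1), the residue class x of X is a principal 3N-th root of unity; that is, x^{3N} = 1 and for every μ with 1 ≤ μ < 3N, the element 1 − x^μ is not a zero divisor in B_N. -/
/-!
Put `y = x ^ N`. The defining relation says `y ^ 2 + y + 1 = 0`, so `y ^ 3 = 1`, and in
characteristic 2 also `(1 - y) * y = y + y + 1 = 1`, so `1 - y` is a unit. For `0 < μ < 3N`,
Bézout modulo `3N` makes `x ^ gcd(μ, 3N)` a power of `x ^ μ`, hence `1 - x ^ μ` divides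
`1 - x ^ gcd(μ, 3N)`; since `3N` is a power of 3, `gcd(μ, 3N)` divides `N`, so this in turn
divides the unit `1 - y`.
-/

open Polynomial

theorem Nat.gcd_prime_pow_succ_dvd_pow {p k m : ℕ} (hp : p.Prime) (hm0 : 0 < m)
    (hm : m < p ^ (k + 1)) : m.gcd (p ^ (k + 1)) ∣ p ^ k := by
  obtain ⟨j, hj, hgj⟩ := (Nat.dvd_prime_pow hp).mp (Nat.gcd_dvd_right m (p ^ (k + 1)))
  rcases Nat.lt_or_ge j (k + 1) with hjk | hjk
  · exact hgj ▸ pow_dvd_pow p (by omega)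
  · have hdvd : p ^ (k + 1) ∣ m := by
      rw [show j = k + 1 by omega] at hgj
      exact hgj ▸ Nat.gcd_dvd_left m _
    exact absurd (Nat.le_of_dvd hm0 hdvd) (by omega)

section CommRing

variable {R : Type*} [CommRing R]

theorem pow_three_eq_one_of_sq_add_add_one_eq_zero {y : R} (hy : y ^ 2 + y + 1 = 0) :
    y ^ 3 = 1 := by
  linear_combination (y - 1) * hy

theorem isUnit_one_sub_of_sq_add_add_one_eq_zero (h2 : (2 : R) = 0) {y : R}
    (hy : y ^ 2 + y + 1 = 0) : IsUnit (1 - y) :=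
  IsUnit.of_mul_eq_one y (by linear_combination -hy + y * h2)

theorem one_sub_pow_dvd_one_sub_pow_gcd_s7 {x : R} {m n : ℕ} (hx : x ^ n = 1)
    (hmn : m.gcd n < n) : 1 - x ^ m ∣ 1 - x ^ m.gcd n := by
  obtain ⟨a, -, ha⟩ := Nat.exists_mul_mod_eq_gcd hmn
  have hpow : (x ^ m) ^ a = x ^ m.gcd n := by rw [← pow_mul, pow_eq_pow_mod _ hx, ha]
  exact hpow ▸ one_sub_dvd_one_sub_pow (x ^ m) a

end CommRing

/-- Let `k` be a field of characteristic 2 and `N = 3 ^ ν`. In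
`B_N = k[X]/(X^{2N} + X^N + 1)` the residue class `x` of `X` is a principal `3N`-th
root of unity: `x ^ (3N) = 1` and `1 - x ^ μ` is not a zero divisor for all
`1 ≤ μ < 3N`. -/
theorem schoenhage_root (k : Type*) [Field k] [CharP k 2] (ν N : ℕ) (hN : N = 3 ^ ν) :
    (Ideal.Quotient.mk
        (Ideal.span {(Polynomial.X : Polynomial k) ^ (2 * N) + Polynomial.X ^ N + 1})
        Polynomial.X) ^ (3 * N) = 1 ∧
      ∀ μ : ℕ, 1 ≤ μ → μ < 3 * N →
        1 - (Ideal.Quotient.mk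
              (Ideal.span
                {(Polynomial.X : Polynomial k) ^ (2 * N) + Polynomial.X ^ N + 1})
              Polynomial.X) ^ μ ∈
          nonZeroDivisors
            (Polynomial k ⧸
              Ideal.span
                {(Polynomial.X : Polynomial k) ^ (2 * N) + Polynomial.X ^ N + 1}) := by
  set I := Ideal.span {(X : k[X]) ^ (2 * N) + X ^ N + 1}
  set x := Ideal.Quotient.mk I X
  have hy : (x ^ N) ^ 2 + x ^ N + 1 = 0 := by
    simpa [x, ← pow_mul, mul_comm] using
      Ideal.Quotient.eq_zero_iff_mem.mpr (Ideal.mem_span_singleton_self _ : _ ∈ I)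
  have h2 : (2 : k[X] ⧸ I) = 0 := by
    rw [← map_ofNat (algebraMap k (k[X] ⧸ I)) 2, CharTwo.two_eq_zero, map_zero]
  have hx : x ^ (3 * N) = 1 := by
    rw [mul_comm, pow_mul]
    exact pow_three_eq_one_of_sq_add_add_one_eq_zero hy
  refine ⟨hx, fun μ hμ0 hμ => ?_⟩
  have h3N : 3 * N = 3 ^ (ν + 1) := by rw [hN, pow_succ, mul_comm]
  obtain ⟨t, ht⟩ : μ.gcd (3 * N) ∣ N := by
    rw [h3N, hN]
    exact Nat.gcd_prime_pow_succ_dvd_pow Nat.prime_three hμ0 (h3N ▸ hμ)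
  have hunit : IsUnit (1 - x ^ N) := isUnit_one_sub_of_sq_add_add_one_eq_zero h2 hy
  refine (isUnit_of_dvd_unit ?_ hunit).mem_nonZeroDivisors
  calc 1 - x ^ μ ∣ 1 - x ^ μ.gcd (3 * N) :=
        one_sub_pow_dvd_one_sub_pow_gcd_s7 hx ((Nat.gcd_le_left _ hμ0).trans_lt hμ)
    _ ∣ 1 - (x ^ μ.gcd (3 * N)) ^ t := one_sub_dvd_one_sub_pow _ t
    _ = 1 - x ^ N := by rw [← pow_mul, ← ht]
end

section
/- Let k be a field and m ≥ 1 an integer not divisible by the characteristic of k (i.e., m·1_k ≠ 0). In the quotient ring C_m = k[X]/(Φ_m(X)), where Φ_m denotes the m-th cyclotomic polynomial, the residue class x of X is a principal m-th root of unity; that is, x^m = 1 and for every ν with 1 ≤ ν < m, the element 1 − x^ν is not a zero divisor in C_m. -/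
open Polynomial

/-- A common root of `Φ_n` and `X ^ ν - 1` in an algebraic closure would be a primitive
`n`-th root of unity of order at most `ν < n`. -/
theorem Polynomial.isCoprime_cyclotomic_X_pow_sub_one {K : Type*} [Field K] {n ν : ℕ}
    (hn : (n : K) ≠ 0) (hν : 0 < ν) (hνn : ν < n) :
    IsCoprime (cyclotomic n K) (X ^ ν - 1) := by
  rw [isCoprime_iff_aeval_ne_zero_of_isAlgClosed K (AlgebraicClosure K)]
  intro a
  by_contra! ha
  have : NeZero (n : AlgebraicClosure K) :=
    ⟨by simpa using (algebraMap K (AlgebraicClosure K)).injective.ne hn⟩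
  have hprim : IsPrimitiveRoot a n := by
    rw [← isRoot_cyclotomic_iff, IsRoot, ← map_cyclotomic n (algebraMap K _),
      eval_map_algebraMap]
    exact ha.1
  exact hprim.pow_ne_one_of_pos_of_lt hν.ne' hνn (by simpa [sub_eq_zero] using ha.2)

theorem Ideal.Quotient.isUnit_mk_of_isCoprime {R : Type*} [CommRing R] {p q : R}
    (h : IsCoprime p q) : IsUnit (Ideal.Quotient.mk (Ideal.span {p}) q) := by
  obtain ⟨a, b, hab⟩ := h
  refine IsUnit.of_mul_eq_one_right (Ideal.Quotient.mk _ b) ?_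
  rw [← map_mul, ← map_one (Ideal.Quotient.mk _), Ideal.Quotient.eq, ← hab,
    Ideal.mem_span_singleton]
  exact ⟨-a, by ring⟩

theorem cyclotomic_quotient_root_general (k : Type*) [Field k] (m : ℕ)
    (hchar : (m : k) ≠ 0) :
    (Ideal.Quotient.mk (Ideal.span {Polynomial.cyclotomic m k}) Polynomial.X) ^ m = 1 ∧
      ∀ ν : ℕ, 1 ≤ ν → ν < m →
        1 - (Ideal.Quotient.mk (Ideal.span {Polynomial.cyclotomic m k})
              Polynomial.X) ^ ν ∈
          nonZeroDivisors (Polynomial k ⧸ Ideal.span {Polynomial.cyclotomic m k}) := by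
  refine ⟨?_, fun ν hν hνm => ?_⟩
  · rw [← map_pow, ← sub_eq_zero, ← map_one (Ideal.Quotient.mk _), ← map_sub,
      Ideal.Quotient.eq_zero_iff_mem, Ideal.mem_span_singleton]
    exact cyclotomic.dvd_X_pow_sub_one m k
  · have hunit := Ideal.Quotient.isUnit_mk_of_isCoprime
      (isCoprime_cyclotomic_X_pow_sub_one hchar hν hνm).neg_right
    rw [neg_sub, map_sub, map_one, map_pow] at hunit
    exact hunit.mem_nonZeroDivisors

/-- Let `k` be a field and `m ≥ 1` not divisible by the characteristic
of `k` (i.e. `m · 1_k ≠ 0`). In `C_m = k[X]/(Φ_m(X))`, where `Φ_m` is the `m`-th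
cyclotomic polynomial, the residue class `x` of `X` is a principal `m`-th root of
unity: `x ^ m = 1` and `1 - x ^ ν` is not a zero divisor for all `1 ≤ ν < m`. -/
theorem cyclotomic_quotient_root (k : Type*) [Field k] (m : ℕ) (hm : 1 ≤ m)
    (hchar : (m : k) ≠ 0) :
    (Ideal.Quotient.mk (Ideal.span {Polynomial.cyclotomic m k}) Polynomial.X) ^ m = 1 ∧
      ∀ ν : ℕ, 1 ≤ ν → ν < m →
        1 - (Ideal.Quotient.mk (Ideal.span {Polynomial.cyclotomic m k})
              Polynomial.X) ^ ν ∈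
          nonZeroDivisors (Polynomial k ⧸ Ideal.span {Polynomial.cyclotomic m k}) :=
  cyclotomic_quotient_root_general k m hchar
end

section
/- Let A be a commutative ring, n ≥ 1, and suppose A contains a principal 2n-th root of unity ω. Then the A-algebras A[X]/(X^n + 1) and A[X]/(X^n − 1) are isomorphic; an isomorphism is induced by the substitution X ↦ ωX. -/
/-!
Since `(1 - ω ^ n) (1 + ω ^ n) = 1 - ω ^ (2n) = 0` and `1 - ω ^ n` is not a zero divisor,
`ω ^ n = -1`. The substitution `X ↦ ωX` is an automorphism of `A[X]` (`ω` is a unit as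
`ω ^ (2n) = 1`) sending `X ^ n + 1` to `ω ^ n X ^ n + 1 = -(X ^ n - 1)`, so it carries the
ideal `(X ^ n + 1)` onto `(X ^ n - 1)` and descends to the quotients.
-/

open Polynomial

theorem eq_neg_one_of_sq_eq_one {A : Type*} [CommRing A] {a : A} (h : a ^ 2 = 1)
    (ha : 1 - a ∈ nonZeroDivisors A) : a = -1 := by
  have : (1 - a) * (1 + a) = 0 := by linear_combination -h
  linear_combination (mem_nonZeroDivisors_iff.mp ha).2 (1 + a) (by rwa [mul_comm])

theorem map_span_X_pow_add_one_algEquivCMulX {A : Type*} [CommRing A] {n : ℕ} {ω : A}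
    [Invertible ω] (hω : ω ^ n = -1) :
    (Ideal.span {(X : A[X]) ^ n + 1}).map (algEquivCMulXAddC ω 0 : A[X] →+* A[X]) =
      Ideal.span {X ^ n - 1} := by
  have himage : algEquivCMulXAddC ω 0 ((X : A[X]) ^ n + 1) = -(X ^ n - 1) := by
    simp only [algEquivCMulXAddC_apply, map_zero, add_zero, map_add, map_pow, map_one, aeval_X,
      mul_pow, ← C_pow, hω, map_neg]
    ring
  rw [Ideal.map_span, Set.image_singleton, RingHom.coe_coe, himage, Ideal.span_singleton_neg]

/-- Let `A` be a commutative ring, `n ≥ 1`, and suppose `A` contains a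
principal `2n`-th root of unity `ω`. Then the `A`-algebras `A[X]/(X^n + 1)` and
`A[X]/(X^n − 1)` are isomorphic, an isomorphism being induced by the substitution
`X ↦ ωX`. -/
theorem quotient_iso_of_principal_root (A : Type*) [CommRing A] (n : ℕ) (hn : 1 ≤ n)
    (ω : A) (hω : ω ^ (2 * n) = 1)
    (hprin : ∀ ν : ℕ, 1 ≤ ν → ν < 2 * n → 1 - ω ^ ν ∈ nonZeroDivisors A) :
    ∃ e : (Polynomial A ⧸ Ideal.span {(Polynomial.X : Polynomial A) ^ n + 1}) ≃ₐ[A]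
        (Polynomial A ⧸ Ideal.span {(Polynomial.X : Polynomial A) ^ n - 1}),
      ∀ f : Polynomial A,
        e (Ideal.Quotient.mk (Ideal.span {(Polynomial.X : Polynomial A) ^ n + 1}) f) =
          Ideal.Quotient.mk (Ideal.span {(Polynomial.X : Polynomial A) ^ n - 1})
            (f.comp (Polynomial.C ω * Polynomial.X)) := by
  have hωn : ω ^ n = -1 :=
    eq_neg_one_of_sq_eq_one (by rw [← pow_mul, mul_comm, hω]) (hprin n hn (by omega))
  let _ : Invertible ω := (IsUnit.of_pow_eq_one hω (by omega)).invertible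
  refine ⟨Ideal.quotientEquivAlg _ _ (algEquivCMulXAddC ω 0)
    (map_span_X_pow_add_one_algEquivCMulX hωn).symm, fun f => ?_⟩
  rw [Ideal.quotientEquivAlg_mk, algEquivCMulXAddC_apply, map_zero, add_zero, comp_eq_aeval]
end

section
/- Let A be a commutative ring, n = n₁·n₂ with n₁, n₂ ≥ 1, and let ω ∈ A satisfy ω^n = 1. Set ω₁ = ω^{n₂} and ω₂ = ω^{n₁}. Then for any a_0, …, a_{n−1} ∈ A and all 0 ≤ j < n₂, 0 ≤ l < n₁, the Fourier coefficient ã_{n₁j+l} = ∑_{ν=0}^{n−1} a_ν ω^{(n₁j+l)ν} satisfies ã_{n₁j+l} = ∑_{μ=0}^{n₂−1} ( ω^{μl} · ∑_{ν=0}^{n₁−1} a_{n₂ν+μ} ω₁^{νl} ) · ω₂^{μj}. -/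
/-! Split the index `ν < n₁n₂` as `ν = n₂ν' + μ` with `μ < n₂`, `ν' < n₁`. Multiplying out
`(n₁j + l)(n₂ν' + μ)`, the term `n₁n₂jν'` contributes `ω^{n₁n₂jν'} = 1`, and the remaining three
terms give the twiddle factor `ω^{μl}`, the inner factor `ω₁^{ν'l}` and the outer factor `ω₂^{μj}`. -/

open Finset

theorem Finset.sum_range_mul_eq_sum_sum {M : Type*} [AddCommMonoid M] (f : ℕ → M) (m n : ℕ) :
    ∑ i ∈ range (m * n), f i = ∑ r ∈ range n, ∑ q ∈ range m, f (n * q + r) := by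
  induction m with
  | zero => simp
  | succ m ih =>
    rw [Nat.succ_mul, sum_range_add, ih, ← sum_add_distrib]
    simp only [sum_range_succ, mul_comm m n]

theorem pow_cooleyTukey_exponent {M : Type*} [CommMonoid M] {ω : M} {n₁ n₂ : ℕ}
    (hω : ω ^ (n₁ * n₂) = 1) (j l μ ν : ℕ) :
    ω ^ ((n₁ * j + l) * (n₂ * ν + μ)) = ω ^ (μ * l) * (ω ^ n₂) ^ (ν * l) * (ω ^ n₁) ^ (μ * j) := by
  have hexp : (n₁ * j + l) * (n₂ * ν + μ) =
      n₁ * n₂ * (j * ν) + μ * l + n₂ * (ν * l) + n₁ * (μ * j) := by ring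
  rw [hexp, pow_add, pow_add, pow_add, pow_mul ω (n₁ * n₂), hω, one_pow, one_mul,
    ← pow_mul, ← pow_mul]

theorem cooley_tukey_general (A : Type*) [CommRing A] (n₁ n₂ : ℕ) (ω : A) (hω : ω ^ (n₁ * n₂) = 1)
    (a : ℕ → A) (j l : ℕ) :
    ∑ ν ∈ Finset.range (n₁ * n₂), a ν * ω ^ ((n₁ * j + l) * ν) =
      ∑ μ ∈ Finset.range n₂,
        (ω ^ (μ * l) * ∑ ν ∈ Finset.range n₁, a (n₂ * ν + μ) * (ω ^ n₂) ^ (ν * l)) *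
          (ω ^ n₁) ^ (μ * j) := by
  rw [sum_range_mul_eq_sum_sum]
  refine sum_congr rfl fun μ _ => ?_
  rw [mul_sum, sum_mul]
  refine sum_congr rfl fun ν _ => ?_
  rw [pow_cooleyTukey_exponent hω]
  ring

/-- (Cooley–Tukey identity.) Let `A` be a commutative ring,
`n = n₁·n₂` with `n₁, n₂ ≥ 1`, and `ω ∈ A` with `ω ^ n = 1`. Set `ω₁ = ω^{n₂}`,
`ω₂ = ω^{n₁}`. Then for all `a_0, …, a_{n−1} ∈ A`, `j < n₂` and `l < n₁`:
`ã_{n₁j+l} = ∑_{μ<n₂} (ω^{μl} · ∑_{ν<n₁} a_{n₂ν+μ} ω₁^{νl}) · ω₂^{μj}`. -/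
theorem cooley_tukey (A : Type*) [CommRing A] (n₁ n₂ : ℕ) (hn₁ : 1 ≤ n₁)
    (hn₂ : 1 ≤ n₂) (ω : A) (hω : ω ^ (n₁ * n₂) = 1) (a : ℕ → A)
    (j l : ℕ) (hj : j < n₂) (hl : l < n₁) :
    ∑ ν ∈ Finset.range (n₁ * n₂), a ν * ω ^ ((n₁ * j + l) * ν) =
      ∑ μ ∈ Finset.range n₂,
        (ω ^ (μ * l) * ∑ ν ∈ Finset.range n₁, a (n₂ * ν + μ) * (ω ^ n₂) ^ (ν * l)) *
          (ω ^ n₁) ^ (μ * j) :=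
  cooley_tukey_general A n₁ n₂ ω hω a j l
end

section
/- Let A be a commutative ring, m ≥ 1, and let f ∈ A[X]. Let c' be the remainder of f upon division by X^{3m} − 1 and let c be the remainder of f upon division by X^{2m} + X^m + 1. Then for every i with 0 ≤ i < m, the coefficients satisfy c_i = c'_i − c'_{i+2m} and c_{m+i} = c'_{m+i} − c'_{i+2m}, where c_j and c'_j denote the coefficients of X^j in c and c' respectively. -/
/-!
Since `X^{2m} + X^m + 1` divides `X^{3m} - 1`, reducing `f` modulo `X^{2m} + X^m + 1` may be done
on `c' = f mod (X^{3m} - 1)`. Split `c' = lo + X^{2m} hi` with `deg lo < 2m` and `deg hi < m`;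
as `X^{2m} ≡ -(X^m + 1)`, the remainder is `lo - (X^m + 1) hi`, which already has degree `< 2m`.
-/

open Polynomial

namespace Polynomial

section Ring

variable {R : Type*} [Ring R]

lemma coeff_modByMonic_X_pow (f : R[X]) (n k : ℕ) :
    (f %ₘ X ^ n).coeff k = if k < n then f.coeff k else 0 := by
  nontriviality R
  split_ifs with hk
  · conv_rhs => rw [← modByMonic_add_div f (X ^ n)]
    rw [coeff_add, coeff_X_pow_mul', if_neg (by omega), add_zero]
  · refine coeff_eq_zero_of_degree_lt ((degree_modByMonic_lt f (monic_X_pow n)).trans_le ?_)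
    rw [degree_X_pow]
    exact_mod_cast not_lt.1 hk

lemma coeff_divByMonic_X_pow (f : R[X]) (n k : ℕ) :
    (f /ₘ X ^ n).coeff k = f.coeff (k + n) := by
  conv_rhs => rw [← modByMonic_add_div f (X ^ n)]
  rw [coeff_add, coeff_X_pow_mul, coeff_modByMonic_X_pow, if_neg (by omega), zero_add]

lemma degree_modByMonic_X_pow_sub_one_lt (f : R[X]) {n : ℕ} (hn : 0 < n) :
    (f %ₘ (X ^ n - 1)).degree < ↑n := by
  nontriviality R
  have h := degree_modByMonic_lt f (monic_X_pow_sub_C (1 : R) hn.ne')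
  rwa [degree_X_pow_sub_C hn, C_1] at h

end Ring

variable {R : Type*} [CommRing R] {m : ℕ}

lemma modByMonic_modByMonic_of_dvd (f : R[X]) {p q : R[X]} (hq : q.Monic) (hqp : q ∣ p) :
    f %ₘ p %ₘ q = f %ₘ q :=
  modByMonic_eq_of_dvd_sub hq (hqp.trans (dvd_modByMonic_sub f p))

lemma X_pow_two_mul_add_X_pow_add_one_dvd :
    (X : R[X]) ^ (2 * m) + X ^ m + 1 ∣ X ^ (3 * m) - 1 :=
  ⟨X ^ m - 1, by ring⟩

lemma coeff_X_pow_add_one_mul (h : R[X]) (k : ℕ) :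
    ((X ^ m + 1) * h).coeff k = (if m ≤ k then h.coeff (k - m) else 0) + h.coeff k := by
  rw [add_mul, one_mul, coeff_add, coeff_X_pow_mul']

lemma degree_X_pow_add_one_lt [Nontrivial R] (hm : 0 < m) :
    ((X : R[X]) ^ m + 1).degree < ↑(2 * m) := by
  rw [← C_1, degree_X_pow_add_C hm]
  exact_mod_cast (by omega : m < 2 * m)

lemma monic_X_pow_two_mul_add_X_pow_add_one (hm : 0 < m) :
    ((X : R[X]) ^ (2 * m) + X ^ m + 1).Monic := by
  nontriviality R
  rw [add_assoc]
  exact monic_X_pow_add (degree_X_pow_add_one_lt hm)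

lemma degree_X_pow_two_mul_add_X_pow_add_one [Nontrivial R] (hm : 0 < m) :
    ((X : R[X]) ^ (2 * m) + X ^ m + 1).degree = ↑(2 * m) := by
  have h : ((X : R[X]) ^ m + 1).degree < ((X : R[X]) ^ (2 * m)).degree := by
    rw [degree_X_pow]
    exact degree_X_pow_add_one_lt hm
  rw [add_assoc, degree_add_eq_left_of_degree_lt h, degree_X_pow]

lemma modByMonic_X_pow_two_mul_add_X_pow_add_one {c : R[X]} (hm : 0 < m)
    (hc : c.degree < ↑(3 * m)) :
    c %ₘ (X ^ (2 * m) + X ^ m + 1) = c %ₘ X ^ (2 * m) - (X ^ m + 1) * (c /ₘ X ^ (2 * m)) := by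
  nontriviality R
  have hq := monic_X_pow_two_mul_add_X_pow_add_one (R := R) hm
  have hdvd :
      X ^ (2 * m) + X ^ m + 1 ∣ c - (c %ₘ X ^ (2 * m) - (X ^ m + 1) * (c /ₘ X ^ (2 * m))) :=
    ⟨c /ₘ X ^ (2 * m), by linear_combination (-1 : R[X]) * modByMonic_add_div c (X ^ (2 * m))⟩
  rw [modByMonic_eq_of_dvd_sub hq hdvd, (modByMonic_eq_self_iff hq).2]
  rw [degree_X_pow_two_mul_add_X_pow_add_one hm, degree_lt_iff_coeff_zero]
  intro j hj
  have hc0 := (degree_lt_iff_coeff_zero c _).1 hc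
  rw [coeff_sub, coeff_modByMonic_X_pow, if_neg (by omega), coeff_X_pow_add_one_mul,
    if_pos (by omega), coeff_divByMonic_X_pow, coeff_divByMonic_X_pow,
    hc0 (j - m + 2 * m) (by omega), hc0 (j + 2 * m) (by omega), add_zero, sub_zero]

lemma coeff_modByMonic_X_pow_two_mul_add_X_pow_add_one {c : R[X]} (hc : c.degree < ↑(3 * m))
    {i : ℕ} (hi : i < m) :
    (c %ₘ (X ^ (2 * m) + X ^ m + 1)).coeff i = c.coeff i - c.coeff (i + 2 * m) := by
  rw [modByMonic_X_pow_two_mul_add_X_pow_add_one (by omega) hc, coeff_sub,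
    coeff_modByMonic_X_pow, if_pos (by omega), coeff_X_pow_add_one_mul, if_neg (by omega),
    coeff_divByMonic_X_pow, zero_add]

lemma coeff_add_modByMonic_X_pow_two_mul_add_X_pow_add_one {c : R[X]}
    (hc : c.degree < ↑(3 * m)) {i : ℕ} (hi : i < m) :
    (c %ₘ (X ^ (2 * m) + X ^ m + 1)).coeff (m + i) = c.coeff (m + i) - c.coeff (i + 2 * m) := by
  rw [modByMonic_X_pow_two_mul_add_X_pow_add_one (by omega) hc, coeff_sub,
    coeff_modByMonic_X_pow, if_pos (by omega), coeff_X_pow_add_one_mul, if_pos (by omega),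
    coeff_divByMonic_X_pow, coeff_divByMonic_X_pow, Nat.add_sub_cancel_left,
    (degree_lt_iff_coeff_zero c _).1 hc (m + i + 2 * m) (by omega), add_zero]

end Polynomial

theorem schoenhage_recover_general (A : Type*) [CommRing A] (m : ℕ)
    (f : Polynomial A) :
    ∀ i : ℕ, i < m →
      (f %ₘ ((Polynomial.X : Polynomial A) ^ (2 * m) + Polynomial.X ^ m + 1)).coeff i =
          (f %ₘ ((Polynomial.X : Polynomial A) ^ (3 * m) - 1)).coeff i -
            (f %ₘ ((Polynomial.X : Polynomial A) ^ (3 * m) - 1)).coeff (i + 2 * m) ∧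
        (f %ₘ ((Polynomial.X : Polynomial A) ^ (2 * m) + Polynomial.X ^ m + 1)).coeff
            (m + i) =
          (f %ₘ ((Polynomial.X : Polynomial A) ^ (3 * m) - 1)).coeff (m + i) -
            (f %ₘ ((Polynomial.X : Polynomial A) ^ (3 * m) - 1)).coeff (i + 2 * m) := by
  intro i hi
  have hc : (f %ₘ (X ^ (3 * m) - 1)).degree < ↑(3 * m) :=
    degree_modByMonic_X_pow_sub_one_lt f (by omega)
  rw [← modByMonic_modByMonic_of_dvd f (monic_X_pow_two_mul_add_X_pow_add_one (by omega))
    X_pow_two_mul_add_X_pow_add_one_dvd]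
  exact ⟨coeff_modByMonic_X_pow_two_mul_add_X_pow_add_one hc hi,
    coeff_add_modByMonic_X_pow_two_mul_add_X_pow_add_one hc hi⟩

/-- Let `A` be a commutative ring, `m ≥ 1`, `f ∈ A[X]`. Let `c'` be
the remainder of `f` modulo `X^{3m} − 1` and `c` the remainder of `f` modulo
`X^{2m} + X^m + 1`. Then for all `0 ≤ i < m`: `c_i = c'_i − c'_{i+2m}` and
`c_{m+i} = c'_{m+i} − c'_{i+2m}`. -/
theorem schoenhage_recover (A : Type*) [CommRing A] (m : ℕ) (hm : 1 ≤ m)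
    (f : Polynomial A) :
    ∀ i : ℕ, i < m →
      (f %ₘ ((Polynomial.X : Polynomial A) ^ (2 * m) + Polynomial.X ^ m + 1)).coeff i =
          (f %ₘ ((Polynomial.X : Polynomial A) ^ (3 * m) - 1)).coeff i -
            (f %ₘ ((Polynomial.X : Polynomial A) ^ (3 * m) - 1)).coeff (i + 2 * m) ∧
        (f %ₘ ((Polynomial.X : Polynomial A) ^ (2 * m) + Polynomial.X ^ m + 1)).coeff
            (m + i) =
          (f %ₘ ((Polynomial.X : Polynomial A) ^ (3 * m) - 1)).coeff (m + i) -
            (f %ₘ ((Polynomial.X : Polynomial A) ^ (3 * m) - 1)).coeff (i + 2 * m) :=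
  schoenhage_recover_general A m f
end
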